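/- arXiv:2201.00782 — 3 statements merged into one kernel-verified Lean document; each statement's English description precedes it below -/
import Mathlib

section
/- Let w_n = |W_{1/2,n}| be the number of binary words of length n such that every maximal factor of the form 0^a 1^b with a > 0 satisfies a/2 > b (equivalently a > 2b). Then w_n = w_{n-1} + w_{n-3} for all n ≥ 3, with w_0 = 1, w_1 = 2, w_2 = 3. -/
/-- `isValid c d w` says every maximal factor of `w` of the form `0^a 1^b`
with `a > 0` satisfies `a * (c/d) > b`, i.e. `c*a > d*b`.
Here `false` plays the role of `0` and `true` of `1`; maximality is expressed
by requiring the prefix to end with `1` (or be empty) and the suffix to start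
with `0` (or be empty). -/
def isValid (c d : ℕ) (w : List Bool) : Prop :=
  ∀ p s : List Bool, ∀ a b : ℕ,
    w = p ++ List.replicate a false ++ List.replicate b true ++ s →
    (p = [] ∨ p.getLast? = some true) →
    (s = [] ∨ s.head? = some false) →
    0 < a → d * b < c * a

/-- number of words of length `n` in `W_{c/d,n}` -/
noncomputable def wcount (c d n : ℕ) : ℕ :=
  Nat.card {w : List Bool // w.length = n ∧ isValid c d w}

/-!
Cutting a word between every `1` and the following `0` splits it into its maximal factors
`0^a 1^b`, so validity can be checked factor by factor (`isValid_append`). For `q = 1/d`, a valid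
word of length `n + 1` either ends in `0`, and deleting that letter leaves an arbitrary valid
word of length `n`, or it ends in `1`. The map `u 0^a 1^k ↦ u 0^(a+d) 1^(k+1)`,
`1^k ↦ 1^(k+d+1)` is a bijection from the valid words of length `m` onto the valid words of
length `m + d + 1` ending in `1`, because `d k < a ↔ d (k + 1) < a + d`.
Hence `w_{m+d+1} = w_{m+d} + w_m`.
-/

open List

section TrailingRun

variable {x y : List Bool} {c : Bool}

theorem rdropWhile_append_replicate (hx : x = [] ∨ x.getLast? = some (!c)) (k : ℕ) :
    (x ++ replicate k c).rdropWhile (· == c) = x := by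
  induction k with
  | zero =>
    rw [replicate_zero, append_nil, rdropWhile_eq_self_iff]
    intro hne
    rcases hx with rfl | hx
    · exact absurd rfl hne
    · rw [getLast?_eq_some_getLast hne, Option.some_inj] at hx
      simp [hx]
  | succ k ih =>
    rw [replicate_succ', ← append_assoc,
      rdropWhile_concat_pos (· == c) _ _ (beq_self_eq_true c), ih]

theorem rtakeWhile_append_replicate (hx : x = [] ∨ x.getLast? = some (!c)) (k : ℕ) :
    (x ++ replicate k c).rtakeWhile (· == c) = replicate k c := by
  have h := rdropWhile_append_rtakeWhile (p := (· == c)) (l := x ++ replicate k c)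
  rw [rdropWhile_append_replicate hx] at h
  exact append_cancel_left h

theorem exists_eq_append_replicate (w : List Bool) (c : Bool) :
    ∃ x k, (x = [] ∨ x.getLast? = some (!c)) ∧ w = x ++ replicate k c := by
  induction w using List.reverseRecOn with
  | nil => exact ⟨[], 0, Or.inl rfl, rfl⟩
  | append_singleton w b ih =>
    obtain ⟨x, k, hx, rfl⟩ := ih
    by_cases hb : b = c
    · exact ⟨x, k + 1, hx, by rw [hb, replicate_succ', append_assoc]⟩
    · refine ⟨x ++ replicate k c ++ [b], 0, Or.inr ?_, (append_nil _).symm⟩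
      rw [getLast?_concat]
      cases b <;> cases c <;> simp_all

theorem eq_and_eq_of_append_replicate_eq (hx : x = [] ∨ x.getLast? = some (!c))
    (hy : y = [] ∨ y.getLast? = some (!c)) {k l : ℕ}
    (h : x ++ replicate k c = y ++ replicate l c) : x = y ∧ k = l := by
  have hxy : x = y := by
    simpa only [rdropWhile_append_replicate hx, rdropWhile_append_replicate hy]
      using congrArg (rdropWhile (· == c)) h
  subst hxy
  simpa using congrArg length (append_cancel_left h)

end TrailingRun

theorem getLast?_append_replicate_of_pos (u : List Bool) {a : ℕ} (ha : 0 < a) (c : Bool) :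
    (u ++ replicate a c).getLast? = some c := by
  simp [getLast?_append, getLast?_replicate, ha.ne']

theorem exists_eq_replicate_or_eq_block (w : List Bool) :
    (∃ k, w = replicate k true) ∨
      ∃ u a k, (u = [] ∨ u.getLast? = some true) ∧ 0 < a ∧
        w = u ++ replicate a false ++ replicate k true := by
  obtain ⟨x, k, hx | hx, rfl⟩ := exists_eq_append_replicate w true
  · exact Or.inl ⟨k, by simp [hx]⟩
  obtain ⟨u, a, hu, rfl⟩ := exists_eq_append_replicate x false
  refine Or.inr ⟨u, a, k, hu, Nat.pos_of_ne_zero ?_, rfl⟩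
  rintro rfl
  rcases hu with rfl | hu <;> simp_all

theorem eq_and_eq_and_eq_of_block_eq {u v : List Bool} {a b k l : ℕ}
    (hu : u = [] ∨ u.getLast? = some true) (hv : v = [] ∨ v.getLast? = some true)
    (ha : 0 < a) (hb : 0 < b)
    (h : u ++ replicate a false ++ replicate k true = v ++ replicate b false ++ replicate l true) :
    u = v ∧ a = b ∧ k = l := by
  obtain ⟨huv, rfl⟩ := eq_and_eq_of_append_replicate_eq (c := true)
    (Or.inr (getLast?_append_replicate_of_pos u ha false))
    (Or.inr (getLast?_append_replicate_of_pos v hb false)) h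
  obtain ⟨rfl, rfl⟩ := eq_and_eq_of_append_replicate_eq hu hv huv
  exact ⟨rfl, rfl, rfl⟩

section Boundary

variable {l l' : List Bool} {c : Bool}

theorem eq_nil_or_getLast?_append (hl : l = [] ∨ l.getLast? = some c)
    (hl' : l' = [] ∨ l'.getLast? = some c) : l ++ l' = [] ∨ (l ++ l').getLast? = some c := by
  rcases hl' with rfl | hl'
  · simpa using hl
  · exact Or.inr (by simp [getLast?_append, hl'])

theorem eq_nil_or_getLast?_of_append (h : l ++ l' = [] ∨ (l ++ l').getLast? = some c) :
    l' = [] ∨ l'.getLast? = some c := by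
  rcases l'.eq_nil_or_concat with rfl | ⟨l'', b, rfl⟩
  · exact Or.inl rfl
  · simpa [← append_assoc] using h

theorem eq_nil_or_head?_append (hl : l = [] ∨ l.head? = some c)
    (hl' : l' = [] ∨ l'.head? = some c) : l ++ l' = [] ∨ (l ++ l').head? = some c := by
  rcases hl with rfl | hl
  · simpa using hl'
  · exact Or.inr (by simp [head?_append, hl])

theorem eq_nil_or_head?_of_append (h : l ++ l' = [] ∨ (l ++ l').head? = some c) :
    l = [] ∨ l.head? = some c := by
  cases l with
  | nil => exact Or.inl rfl
  | cons b l => simpa using h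

end Boundary

theorem replicate_append_replicate_ne_append {a b : ℕ} {e f : List Bool}
    (he : e.getLast? = some true) (hf : f.head? = some false) :
    replicate a false ++ replicate b true ≠ e ++ f := by
  intro h
  have hsorted : (replicate a false ++ replicate b true).Pairwise (· ≤ ·) :=
    pairwise_append.2 ⟨pairwise_replicate_of_refl, pairwise_replicate_of_refl, by simp⟩
  rw [h, pairwise_append] at hsorted
  exact absurd (hsorted.2.2 _ (mem_of_getLast? he) _ (mem_of_head? hf)) (by decide)

section Validity

variable {c d : ℕ}

theorem isValid_append {u v : List Bool} (hu : u = [] ∨ u.getLast? = some true)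
    (hv : v = [] ∨ v.head? = some false) :
    isValid c d (u ++ v) ↔ isValid c d u ∧ isValid c d v := by
  refine ⟨fun h => ⟨fun p s a b hps hp hs ha => ?_, fun p s a b hps hp hs ha => ?_⟩, ?_⟩
  · exact h p (s ++ v) a b (by simp [hps]) hp (eq_nil_or_head?_append hs hv) ha
  · exact h (u ++ p) s a b (by simp [hps]) (eq_nil_or_getLast?_append hu hp) hs ha
  -- A maximal factor cannot straddle the cut: `0^a 1^b` has no factor `10`.
  rintro ⟨hU, hV⟩ p s a b h hp hs ha
  rw [append_assoc p, append_eq_append_iff] at h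
  rcases h with ⟨r, hr, rfl⟩ | ⟨r, rfl, rfl⟩
  · rcases append_eq_append_iff.1 hr with ⟨e, rfl, hblock⟩ | ⟨e, rfl, rfl⟩
    · rcases e.eq_nil_or_concat with rfl | ⟨e', y, rfl⟩
      · exact hV [] s a b (by rw [nil_append] at hblock; simp [← hblock]) (Or.inl rfl) hs ha
      rcases r with _ | ⟨z, r⟩
      · exact hU p [] a b (by simp [hblock]) hp (Or.inl rfl) ha
      exfalso
      refine replicate_append_replicate_ne_append ?_ ?_ hblock
      · simpa using eq_nil_or_getLast?_of_append hu
      · simpa using eq_nil_or_head?_of_append hv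
    · exact hV e s a b (by simp) (eq_nil_or_getLast?_of_append hp) hs ha
  · exact hU p r a b (by simp) hp (eq_nil_or_head?_of_append hs) ha

theorem isValid_replicate_true (k : ℕ) : isValid c d (replicate k true) := by
  intro p s a b h _ _ ha
  have hfalse : false ∈ replicate k true := by
    rw [h]
    simp [ha.ne']
  simp at hfalse

theorem isValid_block (hc : 0 < c) {a b : ℕ} :
    isValid c d (replicate a false ++ replicate b true) ↔ (0 < a → d * b < c * a) := by
  refine ⟨fun h ha => h [] [] a b (by simp) (Or.inl rfl) (Or.inl rfl) ha, ?_⟩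
  intro h p s a' b' hps hp hs ha'
  rcases Nat.eq_zero_or_pos b' with rfl | hb'
  · simpa using Nat.mul_pos hc ha'
  obtain rfl : p = [] := by
    refine hp.resolve_right fun hp => replicate_append_replicate_ne_append
      (f := replicate a' false ++ replicate b' true ++ s) hp ?_ (hps.trans (by simp))
    simp [head?_append, head?_replicate, ha'.ne']
  obtain rfl : s = [] := by
    refine hs.resolve_right fun hs => replicate_append_replicate_ne_append ?_ hs hps
    simp [getLast?_append, getLast?_replicate, hb'.ne']
  obtain ⟨rfl, rfl⟩ : a = a' ∧ b = b' :=
    ⟨by simpa [count_replicate] using congrArg (count false) hps,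
      by simpa [count_replicate] using congrArg (count true) hps⟩
  exact h ha'

theorem isValid_replicate_false (hc : 0 < c) (a : ℕ) : isValid c d (replicate a false) := by
  simpa using (isValid_block (d := d) (b := 0) hc).2 fun ha => Nat.mul_pos hc ha

theorem isValid_append_block (hc : 0 < c) {u : List Bool} {a b : ℕ}
    (hu : u = [] ∨ u.getLast? = some true) (ha : 0 < a) :
    isValid c d (u ++ replicate a false ++ replicate b true) ↔
      isValid c d u ∧ d * b < c * a := by
  rw [append_assoc, isValid_append hu (Or.inr (by simp [head?_append, head?_replicate, ha.ne'])),
    isValid_block hc]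
  simp [ha]

theorem isValid_concat_false (hc : 0 < c) (w : List Bool) :
    isValid c d (w ++ [false]) ↔ isValid c d w := by
  obtain ⟨x, a, hx, rfl⟩ := exists_eq_append_replicate w false
  have hrep (n : ℕ) : replicate n false = [] ∨ (replicate n false).head? = some false := by
    cases n <;> simp [replicate_succ]
  rw [append_assoc, ← replicate_succ', isValid_append hx (hrep _), isValid_append hx (hrep _)]
  simp [isValid_replicate_false hc]

end Validity

def growLastBlock (d : ℕ) (v : List Bool) : List Bool :=
  if v.rdropWhile (· == true) = [] then v ++ replicate (d + 1) true
  else v.rdropWhile (· == true) ++ replicate d false ++ v.rtakeWhile (· == true) ++ [true]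

theorem growLastBlock_replicate_true (d k : ℕ) :
    growLastBlock d (replicate k true) = replicate (k + d + 1) true := by
  have h := rdropWhile_append_replicate (x := []) (c := true) (Or.inl rfl) k
  rw [nil_append] at h
  rw [growLastBlock, if_pos h, ← replicate_add, add_assoc]

theorem growLastBlock_block (d : ℕ) (u : List Bool) {a : ℕ} (ha : 0 < a) (k : ℕ) :
    growLastBlock d (u ++ replicate a false ++ replicate k true) =
      u ++ replicate (a + d) false ++ replicate (k + 1) true := by
  have hx : u ++ replicate a false = [] ∨ (u ++ replicate a false).getLast? = some (!true) :=
    Or.inr (getLast?_append_replicate_of_pos u ha false)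
  have hne : u ++ replicate a false ≠ [] := by simp [ha.ne']
  rw [growLastBlock, rdropWhile_append_replicate hx, if_neg hne, rtakeWhile_append_replicate hx,
    replicate_add, replicate_succ']
  simp only [append_assoc]

theorem growLastBlock_injective (d : ℕ) : Function.Injective (growLastBlock d) := by
  have hfalse {k : ℕ} {w : List Bool} (hw : false ∈ w) : replicate k true ≠ w :=
    fun h => by simp [← h] at hw
  intro v w h
  rcases exists_eq_replicate_or_eq_block v with ⟨k, rfl⟩ | ⟨u, a, k, hu, ha, rfl⟩ <;>
    rcases exists_eq_replicate_or_eq_block w with ⟨l, rfl⟩ | ⟨u', a', l, hu', ha', rfl⟩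
  · rw [growLastBlock_replicate_true, growLastBlock_replicate_true] at h
    simpa using congrArg length h
  · rw [growLastBlock_replicate_true, growLastBlock_block _ _ ha'] at h
    exact absurd h (hfalse (by simp [ha'.ne']))
  · rw [growLastBlock_replicate_true, growLastBlock_block _ _ ha] at h
    exact absurd h.symm (hfalse (by simp [ha.ne']))
  · rw [growLastBlock_block _ _ ha, growLastBlock_block _ _ ha'] at h
    obtain ⟨rfl, haa, hkl⟩ := eq_and_eq_and_eq_of_block_eq hu hu' (by omega) (by omega) h
    rw [Nat.add_right_cancel haa, Nat.add_right_cancel hkl]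

def validWords (c d n : ℕ) : Set (List Bool) := {w | w.length = n ∧ isValid c d w}

theorem wcount_eq_ncard (c d n : ℕ) : wcount c d n = (validWords c d n).ncard :=
  Nat.card_coe_set_eq _

theorem validWords_finite (c d n : ℕ) : (validWords c d n).Finite :=
  (finite_length_eq Bool n).subset fun _ hw => hw.1

theorem validWords_succ {c : ℕ} (hc : 0 < c) (d n : ℕ) :
    validWords c d (n + 1) = (· ++ [false]) '' validWords c d n ∪
      {w ∈ validWords c d (n + 1) | w.getLast? = some true} := by
  ext w
  constructor
  · rintro ⟨hlen, hw⟩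
    rcases w.eq_nil_or_concat with rfl | ⟨w, b, rfl⟩
    · simp at hlen
    rw [concat_eq_append] at hlen hw ⊢
    cases b
    · exact Or.inl ⟨w, ⟨by simpa using hlen, (isValid_concat_false hc w).1 hw⟩, rfl⟩
    · exact Or.inr ⟨⟨hlen, hw⟩, getLast?_concat⟩
  · rintro (⟨w, ⟨hlen, hw⟩, rfl⟩ | ⟨hw, _⟩)
    · exact ⟨by simp [hlen], (isValid_concat_false hc w).2 hw⟩
    · exact hw

theorem validWords_ending_true_eq_image_growLastBlock (d m : ℕ) :
    {w ∈ validWords 1 d (m + d + 1) | w.getLast? = some true} =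
      growLastBlock d '' validWords 1 d m := by
  ext w
  constructor
  · rintro ⟨⟨hlen, hw⟩, hlast⟩
    rcases exists_eq_replicate_or_eq_block w with ⟨k, rfl⟩ | ⟨u, a, k, hu, ha, rfl⟩
    · refine ⟨replicate m true, ⟨length_replicate, isValid_replicate_true m⟩, ?_⟩
      rw [growLastBlock_replicate_true]
      simpa using hlen.symm
    have hk : 0 < k := by
      refine Nat.pos_of_ne_zero fun hk => ?_
      simp [hk, getLast?_append_replicate_of_pos u ha] at hlast
    have hdk := ((isValid_append_block one_pos hu ha).1 hw).2
    have hdk' : d * (k - 1) < 1 * (a - d) := by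
      have : d ≤ d * k := Nat.le_mul_of_pos_right d hk
      rw [Nat.mul_sub_one]
      omega
    refine ⟨u ++ replicate (a - d) false ++ replicate (k - 1) true, ⟨?_, ?_⟩, ?_⟩
    · simp only [length_append, length_replicate] at hlen ⊢
      omega
    · exact (isValid_append_block one_pos hu (by omega)).2
        ⟨((isValid_append_block one_pos hu ha).1 hw).1, hdk'⟩
    · rw [growLastBlock_block _ _ (by omega), Nat.sub_add_cancel (by omega), Nat.sub_add_cancel hk]
  · rintro ⟨v, ⟨hlen, hv⟩, rfl⟩
    rcases exists_eq_replicate_or_eq_block v with ⟨k, rfl⟩ | ⟨u, a, k, hu, ha, rfl⟩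
    · rw [growLastBlock_replicate_true]
      refine ⟨⟨by simpa using hlen, isValid_replicate_true _⟩, ?_⟩
      simp [getLast?_replicate]
    rw [growLastBlock_block _ _ ha]
    obtain ⟨hu_valid, hdk⟩ := (isValid_append_block one_pos hu ha).1 hv
    refine ⟨⟨?_, (isValid_append_block one_pos hu (by omega)).2 ⟨hu_valid, ?_⟩⟩, ?_⟩
    · simp only [length_append, length_replicate] at hlen ⊢
      omega
    · rw [Nat.mul_succ]
      omega
    · simp [getLast?_append, getLast?_replicate]

theorem wcount_add_one {c : ℕ} (hc : 0 < c) (d n : ℕ) :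
    wcount c d (n + 1) =
      wcount c d n + {w ∈ validWords c d (n + 1) | w.getLast? = some true}.ncard := by
  have hdisj : Disjoint ((· ++ [false]) '' validWords c d n)
      {w ∈ validWords c d (n + 1) | w.getLast? = some true} := by
    rw [Set.disjoint_left]
    rintro _ ⟨w, _, rfl⟩ ⟨_, hlast⟩
    simp at hlast
  conv_lhs => rw [wcount_eq_ncard, validWords_succ hc]
  rw [Set.ncard_union_eq hdisj
      ((validWords_finite c d n).image _) ((validWords_finite c d _).sep _),
    Set.ncard_image_of_injective _ (append_left_injective [false]), wcount_eq_ncard]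

theorem wcount_one_add_add_one (d m : ℕ) :
    wcount 1 d (m + d + 1) = wcount 1 d (m + d) + wcount 1 d m := by
  rw [wcount_add_one one_pos, validWords_ending_true_eq_image_growLastBlock,
    Set.ncard_image_of_injective _ (growLastBlock_injective d), wcount_eq_ncard 1 d m]

theorem wcount_one_two_zero : wcount 1 2 0 = 1 := by
  have h : validWords 1 2 0 = {[]} := by
    ext w
    simp only [validWords, Set.mem_ofPred_eq, length_eq_zero_iff, Set.mem_singleton_iff,
      and_iff_left_iff_imp]
    rintro rfl
    exact isValid_replicate_true 0
  rw [wcount_eq_ncard, h, Set.ncard_singleton]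

theorem wcount_one_two_one : wcount 1 2 1 = 2 := by
  have h : validWords 1 2 1 = ↑({[false], [true]} : Finset (List Bool)) := by
    ext w
    simp only [validWords, Set.mem_ofPred_eq, length_eq_one_iff, Finset.coe_insert,
      Finset.coe_singleton, Set.mem_insert_iff, Set.mem_singleton_iff]
    constructor
    · rintro ⟨⟨b, rfl⟩, -⟩
      cases b <;> simp
    · rintro (rfl | rfl)
      · exact ⟨⟨false, rfl⟩, isValid_replicate_false one_pos 1⟩
      · exact ⟨⟨true, rfl⟩, isValid_replicate_true 1⟩
  rw [wcount_eq_ncard, h, Set.ncard_coe_finset]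
  rfl

theorem wcount_one_two_two : wcount 1 2 2 = 3 := by
  have h : validWords 1 2 2 =
      ↑({[false, false], [true, false], [true, true]} : Finset (List Bool)) := by
    ext w
    simp only [validWords, Set.mem_ofPred_eq, length_eq_two, Finset.coe_insert,
      Finset.coe_singleton, Set.mem_insert_iff, Set.mem_singleton_iff]
    constructor
    · rintro ⟨⟨b, b', rfl⟩, hw⟩
      cases b <;> cases b'
      · simp
      · exact absurd ((isValid_block one_pos (a := 1) (b := 1)).1 hw one_pos) (by norm_num)
      · simp
      · simp
    · rintro (rfl | rfl | rfl)
      · exact ⟨⟨_, _, rfl⟩, isValid_replicate_false one_pos 2⟩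
      · exact ⟨⟨_, _, rfl⟩,
          (isValid_concat_false one_pos [true]).2 (isValid_replicate_true 1)⟩
      · exact ⟨⟨_, _, rfl⟩, isValid_replicate_true 2⟩
  rw [wcount_eq_ncard, h, Set.ncard_coe_finset]
  rfl

theorem stmt2 :
    wcount 1 2 0 = 1 ∧ wcount 1 2 1 = 2 ∧ wcount 1 2 2 = 3 ∧
    ∀ n : ℕ, 3 ≤ n → wcount 1 2 n = wcount 1 2 (n - 1) + wcount 1 2 (n - 3) := by
  refine ⟨wcount_one_two_zero, wcount_one_two_one, wcount_one_two_two, fun n hn => ?_⟩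
  obtain ⟨m, rfl⟩ := Nat.exists_eq_add_of_le' hn
  simpa using wcount_one_add_add_one 2 m
end

section
/- For positive rational q = c/d in lowest terms, the ordinary generating function of (|W_{q,n}|)_{n≥0} is W_q(x) = (1 − x^{c+d}) / ((1 − x)(1 − x^{c+d} − P_q(x,x))), where P_q(x,x) = Σ_{i=0}^{c−1} x^{1+⌊i/q⌋+i}. Formally: (1−x)(1 − x^{c+d} − P_q(x,x)) · Σ_{n≥0} |W_{q,n}| x^n = 1 − x^{c+d} as formal power series. -/
open List PowerSeries
open scoped Finset

namespace List

variable {α : Type*}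

theorem exists_eq_replicate_append_head?_ne (x : α) (w : List α) :
    ∃ k u, w = replicate k x ++ u ∧ u.head? ≠ some x := by
  induction w with
  | nil => exact ⟨0, [], rfl, by simp⟩
  | cons y w ih =>
    by_cases hy : y = x
    · obtain ⟨k, u, rfl, hu⟩ := ih
      exact ⟨k + 1, u, by simp [hy, replicate_succ], hu⟩
    · exact ⟨0, y :: w, rfl, by simpa using hy⟩

theorem replicate_append_inj {x : α} {k k' : ℕ} {u u' : List α}
    (hu : u.head? ≠ some x) (hu' : u'.head? ≠ some x)
    (h : replicate k x ++ u = replicate k' x ++ u') : k = k' ∧ u = u' := by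
  wlog hk : k ≤ k' generalizing k k' u u'
  · obtain ⟨h₁, h₂⟩ := this hu' hu h.symm (by omega)
    exact ⟨h₁.symm, h₂.symm⟩
  obtain ⟨j, rfl⟩ := Nat.exists_eq_add_of_le hk
  rw [replicate_add, append_assoc, append_cancel_left_eq] at h
  subst h
  cases j with
  | zero => simp
  | succ j => simp [replicate_succ] at hu

theorem head?_ne_some_iff (s : List Bool) (x : Bool) :
    s.head? ≠ some x ↔ s = [] ∨ s.head? = some (!x) := by
  cases s <;> cases x <;> simp

theorem getLast?_ne_some_iff (s : List Bool) (x : Bool) :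
    s.getLast? ≠ some x ↔ s = [] ∨ s.getLast? = some (!x) := by
  rcases s.eq_nil_or_concat with rfl | ⟨l, y, rfl⟩ <;> cases x <;> simp

theorem head?_replicate_true_append_ne {b : ℕ} {r : List Bool} (hr : r.head? ≠ some true)
    (hb : r = [] ∨ 0 < b) : (replicate b true ++ r).head? ≠ some false := by
  cases b with
  | zero => rcases hb with rfl | hb <;> simp_all [head?_ne_some_iff]
  | succ b => simp [replicate_succ]

theorem replicate_append_replicate_append_inj {a a' b b' : ℕ} {r r' : List Bool}
    (hr : r.head? ≠ some true) (hb : r = [] ∨ 0 < b)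
    (hr' : r'.head? ≠ some true) (hb' : r' = [] ∨ 0 < b')
    (h : replicate a false ++ replicate b true ++ r =
      replicate a' false ++ replicate b' true ++ r') :
    a = a' ∧ b = b' ∧ r = r' := by
  rw [append_assoc, append_assoc] at h
  obtain ⟨rfl, h₁⟩ := replicate_append_inj (head?_replicate_true_append_ne hr hb)
    (head?_replicate_true_append_ne hr' hb') h
  obtain ⟨rfl, rfl⟩ := replicate_append_inj hr hr' h₁
  exact ⟨rfl, rfl, rfl⟩

theorem exists_eq_replicate_append_replicate_append {w : List Bool} (hw : w.head? = some false) :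
    ∃ a b r, 0 < a ∧ r.head? ≠ some true ∧ (r = [] ∨ 0 < b) ∧
      w = replicate a false ++ replicate b true ++ r := by
  obtain ⟨a, u, rfl, hu⟩ := exists_eq_replicate_append_head?_ne false w
  obtain ⟨b, r, rfl, hr⟩ := exists_eq_replicate_append_head?_ne true u
  refine ⟨a, b, r, Nat.pos_of_ne_zero ?_, hr, ?_, by simp⟩
  · rintro rfl
    exact hu (by simpa using hw)
  · rcases Nat.eq_zero_or_pos b with rfl | hb
    · rcases r with _ | ⟨_ | _, r⟩ <;> simp_all
    · exact Or.inr hb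

end List

section Validity

variable {c d : ℕ}

theorem isValid_iff {w : List Bool} : isValid c d w ↔ ∀ p s : List Bool, ∀ a b : ℕ,
    w = p ++ replicate a false ++ replicate b true ++ s →
    p.getLast? ≠ some false → s.head? ≠ some true → 0 < a → d * b < c * a := by
  simp only [isValid, getLast?_ne_some_iff, head?_ne_some_iff, Bool.not_false, Bool.not_true]

theorem isValid_nil : isValid c d [] := by
  intro p s a b h _ _ ha
  have := congrArg length h
  simp only [length_nil, length_append, length_replicate] at this
  omega

theorem isValid_cons_true {w : List Bool} : isValid c d (true :: w) ↔ isValid c d w := by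
  simp only [isValid_iff]
  constructor
  · intro hv p s a b h hp hs ha
    refine hv (true :: p) s a b (by simp [h]) ?_ hs ha
    cases h' : p.getLast? <;> simp_all [getLast?_cons]
  · intro hv p s a b h hp hs ha
    rw [append_assoc, append_assoc, cons_eq_append_iff] at h
    rcases h with ⟨rfl, h⟩ | ⟨p', rfl, h⟩
    · obtain ⟨a, rfl⟩ := Nat.exists_eq_add_of_lt ha
      simp [replicate_succ] at h
    · refine hv p' s a b (by simp [h]) ?_ hs ha
      cases h' : p'.getLast? <;> simp_all [getLast?_cons]

theorem isValid_replicate_append (hc : 0 < c) {a b : ℕ} {r : List Bool}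
    (hr : r.head? ≠ some true) (hb : r = [] ∨ 0 < b) (hab : d * b < c * a)
    (hvr : isValid c d r) : isValid c d (replicate a false ++ replicate b true ++ r) := by
  rw [isValid_iff] at hvr ⊢
  intro p s a' b' h hp hs ha'
  obtain rfl | hb' := Nat.eq_zero_or_pos b'
  · simpa using Nat.mul_pos hc ha'
  rcases eq_or_ne p [] with rfl | hp₀
  · obtain ⟨rfl, rfl, -⟩ :=
      replicate_append_replicate_append_inj hr hb hs (Or.inr hb') (by simpa using h)
    exact hab
  -- `p` ends with a `1`, so it swallows the whole first factor `0^a 1^b`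
  simp only [append_assoc] at h
  rcases append_eq_append_iff.mp h with ⟨t, ht, h⟩ | ⟨t, ht, -⟩
  · rcases append_eq_append_iff.mp h with ⟨t', rfl, rfl⟩ | ⟨u, hu, h⟩
    · refine hvr t' s a' b' (by simp) (fun h' => hp ?_) hs ha'
      rw [ht]
      simp [getLast?_append, h']
    · obtain ⟨-, -, hu⟩ := replicate_eq_append_iff.mp hu
      cases u with
      | nil => exact hvr [] s a' b' (by simpa using h.symm) (by simp) hs ha'
      | cons y u =>
        obtain ⟨a', rfl⟩ := Nat.exists_eq_add_of_lt ha'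
        rw [hu] at h
        simp [replicate_succ] at h
  · obtain ⟨-, hp', -⟩ := replicate_eq_append_iff.mp ht
    rw [hp'] at hp
    simp [getLast?_replicate, hp₀] at hp

theorem isValid_replicate_append_iff (hc : 0 < c) {a b : ℕ} {r : List Bool} (ha : 0 < a)
    (hr : r.head? ≠ some true) (hb : r = [] ∨ 0 < b) :
    isValid c d (replicate a false ++ replicate b true ++ r) ↔
      d * b < c * a ∧ isValid c d r := by
  refine ⟨fun hv => ?_, fun ⟨hab, hvr⟩ => isValid_replicate_append hc hr hb hab hvr⟩
  rw [isValid_iff] at hv ⊢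
  refine ⟨hv [] r a b (by simp) (by simp) hr ha, fun p s a' b' h hp hs ha' => ?_⟩
  refine hv (replicate a false ++ replicate b true ++ p) s a' b' (by simp [h]) ?_ hs ha'
  rcases p.eq_nil_or_concat with rfl | ⟨p, x, rfl⟩
  · obtain ⟨b, rfl⟩ : ∃ b', b = b' + 1 := by
      rcases hb with rfl | hb
      · have := congrArg length h
        simp only [length_nil, nil_append, length_append, length_replicate] at this
        omega
      · exact Nat.exists_eq_succ_of_ne_zero hb.ne'
    simp [replicate_succ']
  · simpa using hp

theorem isValid_replicate_append_replicate (hc : 0 < c) {a b : ℕ}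
    (hab : d * b < c * a) : isValid c d (replicate a false ++ replicate b true) := by
  simpa using isValid_replicate_append hc (r := []) (by simp) (Or.inl rfl) hab isValid_nil

end Validity

instance {α : Type*} [Finite α] (n : ℕ) (P : List α → Prop) :
    Finite {l : List α // l.length = n ∧ P l} :=
  ((List.finite_length_eq α n).subset fun _ h => h.1).to_subtype

abbrev ValidWord (c d n : ℕ) := {w : List Bool // w.length = n ∧ isValid c d w}

abbrev LeadingZeroWord (c d n : ℕ) :=
  {w : List Bool // w.length = n ∧ isValid c d w ∧ w.head? = some false}

noncomputable def leadingZeroCount (c d n : ℕ) : ℕ := Nat.card (LeadingZeroWord c d n)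

/-- `a ∈ blockStarts c d n` encodes the admissible factor `0^a 1^(n-a)`; erasing `n` from this
finset leaves the factors that contain a `1`. -/
def blockStarts (c d n : ℕ) : Finset ℕ := {a ∈ Finset.Icc 1 n | d * (n - a) < c * a}

section Counting

open Finset

variable {c d : ℕ}

theorem mem_blockStarts {n a : ℕ} :
    a ∈ blockStarts c d n ↔ 0 < a ∧ a ≤ n ∧ d * (n - a) < c * a := by
  simp [blockStarts, Nat.one_le_iff_ne_zero, Nat.pos_iff_ne_zero, and_assoc]

theorem sub_pos_of_mem_erase_blockStarts {k a : ℕ} (ha : a ∈ (blockStarts c d k).erase k) :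
    0 < k - a := by
  have ⟨hak, ha⟩ := mem_erase.mp ha
  have := mem_blockStarts.mp ha
  omega

theorem wcount_zero : wcount c d 0 = 1 := by
  rw [wcount, Nat.card_eq_one_iff_exists]
  exact ⟨⟨[], rfl, isValid_nil⟩, fun w => Subtype.ext (length_eq_zero_iff.mp w.2.1)⟩

theorem leadingZeroCount_zero : leadingZeroCount c d 0 = 0 := by
  rw [leadingZeroCount, Nat.card_eq_zero]
  refine .inl ⟨fun ⟨w, hw, _, hh⟩ => ?_⟩
  simp [length_eq_zero_iff.mp hw] at hh

theorem wcount_succ (n : ℕ) :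
    wcount c d (n + 1) = wcount c d n + leadingZeroCount c d (n + 1) := by
  rw [wcount, wcount, leadingZeroCount, ← Nat.card_sum]
  refine (Nat.card_eq_of_bijective (Sum.elim
    (fun w : ValidWord c d n => (⟨true :: w.1, by simp [w.2.1], isValid_cons_true.mpr w.2.2⟩ :
      ValidWord c d (n + 1)))
    (fun w => ⟨w.1, w.2.1, w.2.2.1⟩)) ⟨?_, ?_⟩).symm
  · rintro (⟨w, hw⟩ | ⟨w, hw⟩) (⟨w', hw'⟩ | ⟨w', hw'⟩) h <;>
      simp only [Sum.elim_inl, Sum.elim_inr, Subtype.mk.injEq, cons.injEq, true_and] at h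
    · simp [h]
    · simp [← h] at hw'
    · simp [h] at hw
    · simp [h]
  · rintro ⟨_ | ⟨_ | _, w⟩, hw, hv⟩
    · simp at hw
    · exact ⟨.inr ⟨false :: w, hw, hv, rfl⟩, rfl⟩
    · exact ⟨.inl ⟨w, by simpa using hw, isValid_cons_true.mp hv⟩, rfl⟩

def prependBlock (hc : 0 < c) (n : ℕ) :
    blockStarts c d n ⊕ (Σ p : antidiagonal n, (blockStarts c d p.1.1).erase p.1.1 ×
      LeadingZeroWord c d p.1.2) → LeadingZeroWord c d n
  | .inl ⟨a, ha⟩ =>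
    have ha := mem_blockStarts.mp ha
    ⟨replicate a false ++ replicate (n - a) true,
      by simp only [length_append, length_replicate]; omega,
      isValid_replicate_append_replicate hc ha.2.2, by simp [head?_replicate, ha.1.ne']⟩
  | .inr ⟨p, ⟨a, ha⟩, ⟨w, hw, hv, hh⟩⟩ =>
    have hp := mem_antidiagonal.mp p.2
    have hb := sub_pos_of_mem_erase_blockStarts ha
    have ha := mem_blockStarts.mp (mem_erase.mp ha).2
    ⟨replicate a false ++ replicate (p.1.1 - a) true ++ w,
      by simp only [length_append, length_replicate]; omega,
      isValid_replicate_append hc (by simp [hh]) (.inr hb) ha.2.2 hv,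
      by simp [head?_replicate, ha.1.ne']⟩

theorem prependBlock_injective (hc : 0 < c) (n : ℕ) :
    Function.Injective (prependBlock (d := d) hc n) := by
  have ne_true {w : List Bool} (hh : w.head? = some false) : w.head? ≠ some true := by simp [hh]
  rintro (⟨a, ha⟩ | ⟨p, ⟨a, ha⟩, ⟨w, hw, hv, hh⟩⟩)
    (⟨a', ha'⟩ | ⟨p', ⟨a', ha'⟩, ⟨w', hw', hv', hh'⟩⟩) h <;>
    simp only [prependBlock, Subtype.mk.injEq] at h
  · obtain ⟨rfl, -⟩ := replicate_append_replicate_append_inj (r := []) (r' := []) (by simp)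
      (.inl rfl) (by simp) (.inl rfl) (by simpa using h)
    rfl
  · obtain ⟨-, -, rfl⟩ := replicate_append_replicate_append_inj (r := []) (by simp) (.inl rfl)
      (ne_true hh') (.inr (sub_pos_of_mem_erase_blockStarts ha')) (by simpa using h)
    simp at hh'
  · obtain ⟨-, -, rfl⟩ := replicate_append_replicate_append_inj (r' := []) (ne_true hh)
      (.inr (sub_pos_of_mem_erase_blockStarts ha)) (by simp) (.inl rfl) (by simpa using h)
    simp at hh
  · have hb := sub_pos_of_mem_erase_blockStarts ha
    have hb' := sub_pos_of_mem_erase_blockStarts ha'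
    obtain ⟨rfl, hk, rfl⟩ := replicate_append_replicate_append_inj (ne_true hh) (.inr hb)
      (ne_true hh') (.inr hb') h
    obtain rfl : p = p' := Subtype.ext (Prod.ext (by omega) (hw.symm.trans hw'))
    rfl

theorem prependBlock_surjective (hc : 0 < c) (n : ℕ) :
    Function.Surjective (prependBlock (d := d) hc n) := by
  rintro ⟨w, hw, hv, hh⟩
  obtain ⟨a, b, r, ha, hr, hb, rfl⟩ := exists_eq_replicate_append_replicate_append hh
  obtain ⟨hab, hvr⟩ := (isValid_replicate_append_iff hc ha hr hb).mp hv
  rcases eq_or_ne r [] with rfl | hr₀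
  · obtain rfl : n = a + b := by simpa using hw.symm
    exact ⟨.inl ⟨a, mem_blockStarts.mpr ⟨ha, by omega, by simpa using hab⟩⟩,
      Subtype.ext (by simp [prependBlock])⟩
  · have hb : 0 < b := hb.resolve_left hr₀
    have hrh : r.head? = some false := by
      rcases r with _ | ⟨_ | _, r⟩ <;> simp_all
    refine ⟨.inr ⟨⟨(a + b, r.length), by simpa [add_assoc] using hw⟩,
      ⟨a, mem_erase.mpr ⟨by dsimp only; omega, mem_blockStarts.mpr ⟨ha, by dsimp only; omega,
        by simpa using hab⟩⟩⟩,
      ⟨r, rfl, hvr, hrh⟩⟩, Subtype.ext (by simp [prependBlock])⟩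

theorem leadingZeroCount_eq (hc : 0 < c) (n : ℕ) :
    leadingZeroCount c d n = #(blockStarts c d n) +
      ∑ p ∈ antidiagonal n, #((blockStarts c d p.1).erase p.1) * leadingZeroCount c d p.2 := by
  simp only [leadingZeroCount, ← Nat.card_eq_finsetCard, ← Nat.card_prod,
    ← sum_coe_sort (antidiagonal n), ← Nat.card_sigma, ← Nat.card_sum]
  exact (Nat.card_eq_of_bijective _
    ⟨prependBlock_injective hc n, prependBlock_surjective hc n⟩).symm

end Counting

section Arithmetic

variable {c d : ℕ}

theorem lt_sub_mul_div_iff (hcd : 0 < c + d) (i n : ℕ) :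
    i < n - d * n / (c + d) ↔ i * (c + d) < n * c := by
  rw [show i < n - d * n / (c + d) ↔ d * n / (c + d) < n - i ∧ i < n by
      generalize d * n / (c + d) = q; omega,
    Nat.div_lt_iff_lt_mul hcd]
  rcases le_or_gt i n with h | h
  · obtain ⟨k, rfl⟩ := Nat.exists_eq_add_of_le h
    rw [Nat.add_sub_cancel_left]
    constructor
    · rintro ⟨h, -⟩
      nlinarith
    · intro h
      constructor <;> nlinarith
  · constructor
    · rintro ⟨-, h⟩
      omega
    · intro h
      nlinarith

theorem one_add_mul_div_add_le_iff (hc : 0 < c) (i n : ℕ) :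
    1 + i * d / c + i ≤ n ↔ i * (c + d) < n * c := by
  rw [show 1 + i * d / c + i ≤ n ↔ i * d / c < n - i by generalize i * d / c = q; omega,
    Nat.div_lt_iff_lt_mul hc]
  rcases le_or_gt i n with h | h
  · obtain ⟨k, rfl⟩ := Nat.exists_eq_add_of_le h
    rw [Nat.add_sub_cancel_left]
    constructor <;> intro <;> nlinarith
  · rw [Nat.sub_eq_zero_of_le h.le]
    constructor <;> intro <;> nlinarith

theorem add_sub_mul_add_div (hcd : 0 < c + d) (n : ℕ) :
    n + (c + d) - d * (n + (c + d)) / (c + d) = n - d * n / (c + d) + c := by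
  have h : d * n / (c + d) ≤ n := Nat.div_le_of_le_mul (by nlinarith)
  rw [mul_add, Nat.add_mul_div_right _ _ hcd]
  omega

theorem card_blockStarts (hcd : 0 < c + d) (n : ℕ) :
    #(blockStarts c d n) = n - d * n / (c + d) := by
  rw [← Nat.card_Ioc]
  congr 1
  ext a
  simp only [mem_blockStarts, Finset.mem_Ioc, Nat.div_lt_iff_lt_mul hcd]
  constructor
  · rintro ⟨-, han, h⟩
    obtain ⟨k, rfl⟩ := Nat.exists_eq_add_of_le han
    rw [Nat.add_sub_cancel_left] at h
    constructor <;> nlinarith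
  · rintro ⟨h, han⟩
    obtain ⟨k, rfl⟩ := Nat.exists_eq_add_of_le han
    rw [Nat.add_sub_cancel_left]
    refine ⟨?_, le_add_right le_rfl, ?_⟩ <;> nlinarith

theorem card_filter_one_add_mul_div_add_le (hc : 0 < c) (n : ℕ) :
    #{i ∈ Finset.range c | 1 + i * d / c + i ≤ n} = min c (n - d * n / (c + d)) := by
  rw [← Finset.card_range (min c _)]
  congr 1
  ext i
  simp [one_add_mul_div_add_le_iff hc, lt_sub_mul_div_iff (by omega : 0 < c + d)]

end Arithmetic

section GeneratingFunctions

variable {c d : ℕ}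

theorem PowerSeries.one_sub_X_mul_mk_card_filter_le {ι : Type*} (s : Finset ι) (e : ι → ℕ) :
    (1 - X) * mk (fun n => (#{i ∈ s | e i ≤ n} : ℤ)) = ∑ i ∈ s, X ^ e i := by
  have h : mk (fun n => (#{i ∈ s | e i ≤ n} : ℤ)) = (∑ i ∈ s, X ^ e i) * mk 1 := by
    ext n
    simp [Finset.sum_mul, coeff_X_pow_mul']
  rw [h, mul_comm, mul_assoc, mk_one_mul_one_sub_eq_one, mul_one]

theorem one_sub_X_pow_mul_mk_sub_mul_div (hc : 0 < c) :
    (1 - X ^ (c + d)) * mk (fun n => ((n - d * n / (c + d) : ℕ) : ℤ)) =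
      mk (fun n => (#{i ∈ Finset.range c | 1 + i * d / c + i ≤ n} : ℤ)) := by
  have hcd : 0 < c + d := by omega
  ext n
  rw [sub_mul, one_mul, map_sub, coeff_X_pow_mul', coeff_mk, coeff_mk, coeff_mk,
    card_filter_one_add_mul_div_add_le hc]
  split_ifs with hn
  · obtain ⟨m, rfl⟩ := Nat.exists_eq_add_of_le' hn
    rw [Nat.add_sub_cancel, add_sub_mul_add_div hcd]
    push_cast
    omega
  · have : ¬ c < n - d * n / (c + d) := by
      rw [lt_sub_mul_div_iff hcd]
      nlinarith
    push_cast
    omega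

theorem one_sub_X_mul_one_sub_X_pow_mul_mk_card_blockStarts (hc : 0 < c) :
    (1 - X) * ((1 - X ^ (c + d)) * mk (fun n => (#(blockStarts c d n) : ℤ))) =
      ∑ i ∈ Finset.range c, X ^ (1 + i * d / c + i) := by
  simp only [card_blockStarts (by omega : 0 < c + d)]
  rw [one_sub_X_pow_mul_mk_sub_mul_div hc, one_sub_X_mul_mk_card_filter_le]

theorem one_sub_X_mul_mk_wcount :
    (1 - X) * mk (fun n => (wcount c d n : ℤ)) =
      1 + mk (fun n => (leadingZeroCount c d n : ℤ)) := by
  ext (_ | n)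
  · simp [wcount_zero, leadingZeroCount_zero]
  · simp [sub_mul, wcount_succ]

theorem mk_leadingZeroCount (hc : 0 < c) :
    mk (fun n => (leadingZeroCount c d n : ℤ)) = mk (fun n => (#(blockStarts c d n) : ℤ)) +
      mk (fun n => (#((blockStarts c d n).erase n) : ℤ)) *
        mk (fun n => (leadingZeroCount c d n : ℤ)) := by
  ext n
  simp [coeff_mul, leadingZeroCount_eq hc n]

theorem one_sub_X_mul_mk_card_blockStarts_sub_erase (hc : 0 < c) :
    (1 - X) * (mk (fun n => (#(blockStarts c d n) : ℤ)) -
      mk (fun n => (#((blockStarts c d n).erase n) : ℤ))) = X := by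
  have h : mk (fun n => (#(blockStarts c d n) : ℤ)) -
      mk (fun n => (#((blockStarts c d n).erase n) : ℤ)) = X * mk 1 := by
    ext (_ | n)
    · simp [blockStarts]
    · have hn : n + 1 ∈ blockStarts c d (n + 1) :=
        mem_blockStarts.mpr ⟨n.succ_pos, le_rfl, by simpa⟩
      simp [coeff_succ_X_mul, ← Finset.card_erase_add_one hn]
  rw [h, mul_left_comm, mul_comm (1 - X), mk_one_mul_one_sub_eq_one, mul_one]

end GeneratingFunctions

theorem stmt10_general (c d : ℕ) (hc : 0 < c) :
    (1 - PowerSeries.X) *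
        ((1 : PowerSeries ℤ) - PowerSeries.X ^ (c + d)
          - ∑ i ∈ Finset.range c, PowerSeries.X ^ (1 + i * d / c + i)) *
        PowerSeries.mk (fun n => (wcount c d n : ℤ)) =
      1 - PowerSeries.X ^ (c + d) := by
  linear_combination
    (1 - X ^ (c + d) - ∑ i ∈ Finset.range c, X ^ (1 + i * d / c + i)) * one_sub_X_mul_mk_wcount
    + (1 + mk fun n => (leadingZeroCount c d n : ℤ)) *
      one_sub_X_mul_one_sub_X_pow_mul_mk_card_blockStarts hc
    - (1 - X ^ (c + d)) * mk (fun n => (leadingZeroCount c d n : ℤ)) *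
      one_sub_X_mul_mk_card_blockStarts_sub_erase hc
    + (1 - X ^ (c + d)) * (1 - X) * mk_leadingZeroCount hc

theorem stmt10 (c d : ℕ) (hc : 0 < c) (hd : 0 < d) (hcd : Nat.Coprime c d) :
    (1 - PowerSeries.X) *
        ((1 : PowerSeries ℤ) - PowerSeries.X ^ (c + d)
          - ∑ i ∈ Finset.range c, PowerSeries.X ^ (1 + i * d / c + i)) *
        PowerSeries.mk (fun n => (wcount c d n : ℤ)) =
      1 - PowerSeries.X ^ (c + d) :=
  stmt10_general c d hc
end

section
/- For q = 1/k with k a positive integer, the number w_n of binary words of length n whose maximal factors 0^a 1^b with a > 0 satisfy a > kb obeys w_n = w_{n−1} + w_{n−(k+1)} for n ≥ k+1, with w_j = j+1 for 0 ≤ j ≤ k. -/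
/-- Scanning the reversed word: in state `Sum.inl b` the current run of ones has length `b`;
in state `Sum.inr c` at least `c` more zeros are owed to the last run of ones. -/
def Accepts (k : ℕ) : ℕ ⊕ ℕ → List Bool → Prop
  | .inl _, [] => True
  | .inr c, [] => c = 0
  | .inl b, true :: v => Accepts k (.inl (b + 1)) v
  | .inl b, false :: v => Accepts k (.inr (k * b)) v
  | .inr c, true :: v => c = 0 ∧ Accepts k (.inl 1) v
  | .inr 0, false :: v => Accepts k (.inr 0) v
  | .inr (c + 1), false :: v => Accepts k (.inr c) v

namespace Accepts

variable {k b c : ℕ} {v : List Bool}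

@[simp] lemma inl_nil : Accepts k (.inl b) [] := trivial

@[simp] lemma inr_nil : Accepts k (.inr c) [] ↔ c = 0 := by cases c <;> simp [Accepts]

@[simp] lemma inl_true : Accepts k (.inl b) (true :: v) ↔ Accepts k (.inl (b + 1)) v := Iff.rfl

@[simp] lemma inl_false : Accepts k (.inl b) (false :: v) ↔ Accepts k (.inr (k * b)) v := Iff.rfl

@[simp] lemma inr_true : Accepts k (.inr c) (true :: v) ↔ c = 0 ∧ Accepts k (.inl 1) v := by
  cases c <;> simp [Accepts]

@[simp] lemma inr_zero_false : Accepts k (.inr 0) (false :: v) ↔ Accepts k (.inr 0) v := Iff.rfl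

@[simp] lemma inr_succ_false : Accepts k (.inr (c + 1)) (false :: v) ↔ Accepts k (.inr c) v :=
  Iff.rfl

lemma inr_zero_iff : Accepts k (.inr 0) v ↔ Accepts k (.inl 0) v := by
  rcases v with _ | ⟨_ | _, v⟩ <;> simp

lemma inl_replicate_true_append (j : ℕ) :
    Accepts k (.inl b) (List.replicate j true ++ v) ↔ Accepts k (.inl (b + j)) v := by
  induction j generalizing b with
  | zero => simp
  | succ j ih =>
    rw [List.replicate_succ, List.cons_append, inl_true, ih, Nat.add_right_comm, Nat.add_assoc]

lemma inr_replicate_false_append {j : ℕ} (h : c ≤ j) :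
    Accepts k (.inr c) (List.replicate j false ++ v) ↔ Accepts k (.inr 0) v := by
  induction j generalizing c with
  | zero => simp [Nat.le_zero.mp h]
  | succ j ih =>
    rcases c with _ | c
    · simpa [List.replicate_succ] using ih (Nat.zero_le j)
    · simpa [List.replicate_succ] using ih (Nat.le_of_succ_le_succ h)

lemma le_of_inr_replicate_false_append {j : ℕ} {r : List Bool}
    (h : Accepts k (.inr c) (List.replicate j false ++ r)) (hr : r = [] ∨ r.head? = some true) :
    c ≤ j := by
  induction j generalizing c with
  | zero =>
    rcases r with _ | ⟨x, r⟩
    · simpa using h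
    · obtain rfl : x = true := by simpa using hr
      simp [(inr_true.mp h).1]
  | succ j ih =>
    rcases c with _ | c
    · exact Nat.zero_le _
    · exact Nat.succ_le_succ (ih (by simpa [List.replicate_succ] using h))

lemma exists_of_cons {σ : ℕ ⊕ ℕ} {x : Bool} (h : Accepts k σ (x :: v)) :
    ∃ σ', Accepts k σ' v := by
  rcases σ with b | (_ | c) <;> cases x
  all_goals first | exact ⟨_, h⟩ | exact ⟨_, (inr_true.mp h).2⟩

lemma exists_of_append {σ : ℕ ⊕ ℕ} {t : List Bool} (h : Accepts k σ (t ++ v)) :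
    ∃ σ', Accepts k σ' v := by
  induction t generalizing σ with
  | nil => exact ⟨σ, h⟩
  | cons x t ih => exact (exists_of_cons h).elim fun _ h' => ih h'

lemma exists_of_true_cons {σ : ℕ ⊕ ℕ} (h : Accepts k σ (true :: v)) :
    ∃ b, Accepts k (.inl (b + 1)) v := by
  rcases σ with b | c
  · exact ⟨b, h⟩
  · exact ⟨0, (inr_true.mp h).2⟩

/-- Ones read before the run `1^b` only add to the debt, so the starting state does not matter. -/
lemma mul_lt_of_replicate_append {σ : ℕ ⊕ ℕ} {a : ℕ} {r : List Bool}
    (h : Accepts k σ (List.replicate b true ++ List.replicate a false ++ r)) (ha : 0 < a)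
    (hr : r = [] ∨ r.head? = some true) : k * b < a := by
  rcases b with _ | b
  · simpa using ha
  obtain ⟨c, hc⟩ := exists_of_true_cons (by simpa [List.replicate_succ] using h)
  obtain ⟨a, rfl⟩ := Nat.exists_eq_add_one_of_ne_zero ha.ne'
  rw [inl_replicate_true_append, List.replicate_succ, List.cons_append,
    inl_false] at hc
  have := le_of_inr_replicate_false_append hc hr
  nlinarith

end Accepts

lemma exists_eq_replicate_append (x : Bool) (l : List Bool) :
    ∃ n r, l = List.replicate n x ++ r ∧ (r = [] ∨ r.head? = some !x) := by
  induction l with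
  | nil => exact ⟨0, [], rfl, .inl rfl⟩
  | cons y l ih =>
    by_cases hy : y = x
    · obtain ⟨n, r, rfl, hr⟩ := ih
      exact ⟨n + 1, r, by simp [hy, List.replicate_succ], hr⟩
    · exact ⟨0, y :: l, rfl, .inr (by cases x <;> cases y <;> simp_all)⟩

lemma isValid.of_append {c d : ℕ} {p q : List Bool} (h : isValid c d (p ++ q))
    (hq : q = [] ∨ q.head? = some false) : isValid c d p := by
  intro p' s a b hp hp' hs ha
  refine h p' (s ++ q) a b (by simp [hp]) hp' ?_ ha
  rcases s with _ | ⟨x, s⟩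
  · simpa using hq
  · simpa using hs

lemma isValid_of_accepts {k : ℕ} {w : List Bool} (h : Accepts k (.inl 0) w.reverse) :
    isValid 1 k w := by
  intro p s a b hw hp _ ha
  rw [hw] at h
  simp only [List.reverse_append, List.reverse_replicate, List.append_assoc] at h
  obtain ⟨σ, hσ⟩ := Accepts.exists_of_append h
  have hr : p.reverse = [] ∨ p.reverse.head? = some true := by simpa using hp
  simpa using Accepts.mul_lt_of_replicate_append (by simpa using hσ) ha hr

lemma accepts_of_isValid {k : ℕ} {v : List Bool} (hv : isValid 1 k v.reverse) :
    Accepts k (.inl 0) v := by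
  induction hlen : v.length using Nat.strong_induction_on generalizing v with
  | _ n ih =>
  obtain ⟨b, x, rfl, hx⟩ := exists_eq_replicate_append true v
  obtain ⟨a, r, rfl, hr⟩ := exists_eq_replicate_append false x
  rw [Accepts.inl_replicate_true_append, zero_add]
  rcases a with _ | a
  · obtain rfl : r = [] := by rcases hx with h | h <;> rcases hr with h' | h' <;> simp_all
    simp
  · have hrev : (List.replicate b true ++ (List.replicate (a + 1) false ++ r)).reverse
        = r.reverse ++ (List.replicate (a + 1) false ++ List.replicate b true) := by simp
    rw [hrev] at hv
    have hkb : k * b < a + 1 := by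
      simpa using hv r.reverse [] (a + 1) b (by simp) (by simpa using hr) (.inl rfl) a.succ_pos
    rw [List.replicate_succ, List.cons_append, Accepts.inl_false,
      Accepts.inr_replicate_false_append (by omega), Accepts.inr_zero_iff]
    exact ih r.length (by simp [← hlen]; omega) (hv.of_append (by simp [List.replicate_succ])) rfl

lemma isValid_iff_accepts (k : ℕ) (w : List Bool) :
    isValid 1 k w ↔ Accepts k (.inl 0) w.reverse :=
  ⟨fun h => accepts_of_isValid (by simpa using h), isValid_of_accepts⟩

instance (n : ℕ) (P : List Bool → Prop) : Finite {v : List Bool // v.length = n ∧ P v} :=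
  ((List.finite_length_eq Bool n).subset fun _ hv => hv.1).to_subtype

lemma card_length_succ (P : List Bool → Prop) (n : ℕ) :
    Nat.card {v : List Bool // v.length = n + 1 ∧ P v} =
      Nat.card {v : List Bool // v.length = n ∧ P (true :: v)} +
        Nat.card {v : List Bool // v.length = n ∧ P (false :: v)} := by
  let e : {v : List Bool // v.length = n + 1 ∧ P v} ≃
      Σ x : Bool, {v : List Bool // v.length = n ∧ P (x :: v)} :=
    { toFun := fun v => ⟨v.1.head (List.ne_nil_of_length_eq_add_one v.2.1), v.1.tail,
        by simp [v.2.1], by rw [List.cons_head_tail]; exact v.2.2⟩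
      invFun := fun v => ⟨v.1 :: v.2.1, by simp [v.2.2.1], v.2.2.2⟩
      left_inv := fun v => Subtype.ext (List.cons_head_tail _)
      right_inv := fun _ => rfl }
  rw [Nat.card_congr e, Nat.card_sigma, Fintype.sum_bool]

noncomputable def acceptCount (k : ℕ) (σ : ℕ ⊕ ℕ) (n : ℕ) : ℕ :=
  Nat.card {v : List Bool // v.length = n ∧ Accepts k σ v}

lemma acceptCount_inl_nil (k b : ℕ) : acceptCount k (.inl b) 0 = 1 :=
  Nat.card_eq_one_iff_unique.mpr
    ⟨⟨fun v w => Subtype.ext <|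
      (List.length_eq_zero_iff.mp v.2.1).trans (List.length_eq_zero_iff.mp w.2.1).symm⟩,
    ⟨⟨[], rfl, trivial⟩⟩⟩

lemma acceptCount_inr_zero (k n : ℕ) : acceptCount k (.inr 0) n = acceptCount k (.inl 0) n := by
  simp only [acceptCount, Accepts.inr_zero_iff]

lemma acceptCount_inl_succ (k b n : ℕ) :
    acceptCount k (.inl b) (n + 1) =
      acceptCount k (.inl (b + 1)) n + acceptCount k (.inr (k * b)) n :=
  card_length_succ _ n

lemma acceptCount_inr (k c n : ℕ) :
    acceptCount k (.inr c) n = if c ≤ n then acceptCount k (.inl 0) (n - c) else 0 := by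
  induction c generalizing n with
  | zero => simp [acceptCount_inr_zero]
  | succ c ih =>
    rcases n with _ | n
    · refine Nat.card_eq_zero.mpr (.inl ⟨fun ⟨v, hv, h⟩ => ?_⟩)
      simp [List.length_eq_zero_iff.mp hv] at h
    · rw [acceptCount, card_length_succ]
      simpa [acceptCount] using ih n

lemma acceptCount_inl (k b n : ℕ) :
    acceptCount k (.inl b) n = acceptCount k (.inl 0) (n - k * b) := by
  induction n using Nat.strong_induction_on generalizing b with
  | _ n ih =>
  rcases n with _ | n
  · simp [acceptCount_inl_nil]
  rw [acceptCount_inl_succ, ih n n.lt_succ_self, acceptCount_inr, Nat.mul_succ]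
  split_ifs with h
  · obtain ⟨m, rfl⟩ := Nat.exists_eq_add_of_le h
    have hm : acceptCount k (.inl 0) (m + 1) =
        acceptCount k (.inl 0) (m - k) + acceptCount k (.inl 0) m := by
      rw [acceptCount_inl_succ, ih m (by omega), acceptCount_inr]
      simp
    rw [show k * b + m + 1 - k * b = m + 1 by omega, hm]
    congr 2 <;> omega
  · rw [Nat.sub_eq_zero_of_le (by omega), Nat.sub_eq_zero_of_le (by omega), Nat.add_zero]

lemma acceptCount_succ (k n : ℕ) :
    acceptCount k (.inl 0) (n + 1) =
      acceptCount k (.inl 0) n + acceptCount k (.inl 0) (n - k) := by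
  rw [acceptCount_inl_succ, acceptCount_inl, acceptCount_inr]
  simp [Nat.add_comm]

lemma wcount_eq_acceptCount (k n : ℕ) : wcount 1 k n = acceptCount k (.inl 0) n :=
  Nat.card_congr <| (Function.Involutive.toPerm _ List.reverse_involutive).subtypeEquiv
    fun w => by simp [isValid_iff_accepts]

theorem stmt11_general (k : ℕ) :
    (∀ j : ℕ, j ≤ k → wcount 1 k j = j + 1) ∧
    (∀ n : ℕ, k + 1 ≤ n → wcount 1 k n = wcount 1 k (n - 1) + wcount 1 k (n - (k + 1))) := by
  simp only [wcount_eq_acceptCount]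
  refine ⟨fun j hj => ?_, fun n hn => ?_⟩
  · induction j with
    | zero => exact acceptCount_inl_nil k 0
    | succ j ih =>
      rw [acceptCount_succ, ih (by omega), Nat.sub_eq_zero_of_le (by omega),
        acceptCount_inl_nil]
  · obtain ⟨m, rfl⟩ : ∃ m, n = m + 1 := ⟨n - 1, by omega⟩
    rw [acceptCount_succ, Nat.add_sub_cancel, Nat.add_sub_add_right]

theorem stmt11 (k : ℕ) (hk : 1 ≤ k) :
    (∀ j : ℕ, j ≤ k → wcount 1 k j = j + 1) ∧
    (∀ n : ℕ, k + 1 ≤ n → wcount 1 k n = wcount 1 k (n - 1) + wcount 1 k (n - (k + 1))) :=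
  stmt11_general k
end
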